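/- Every density ρ in the set P_{M,N} = { ρ : {1,…,M} → ℝ | 0 ≤ ρ_i ≤ 1, Σ_i ρ_i = N } is pure-state N-representable: there exists a normalized state Ψ ∈ Λ^N ℂ^M whose density equals ρ. Moreover P_{M,N} is exactly the set of densities of normalized states, i.e., it is maximal. -/

import Mathlib

open scoped BigOperators

/-- The density at vertex `i` of a state `Ψ` in the `N`-fermion space `Λ^N ℂ^M`. -/
def density (M N : ℕ) (Ψ : {I : Finset (Fin M) // I.card = N} → ℂ) (i : Fin M) : ℝ :=
  ∑ I : {I : Finset (Fin M) // I.card = N}, if i ∈ I.1 then Complex.normSq (Ψ I) else 0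

/-!
The density of `Ψ` is the image of the probability vector `I ↦ |Ψ_I|²` under the linear map
sending the point mass at `I` to the indicator vector of `I`, and every probability vector arises
this way (take `Ψ_I = √p_I`). So the theorem says that this linear map sends the standard simplex
onto the hypersimplex `P_{M,N}`. One inclusion is a direct computation. For the other, `P_{M,N}` is
compact and convex, so by Krein–Milman it is the closed convex hull of its extreme points; an
extreme point has only `0/1` coordinates, since two fractional coordinates `i ≠ j` (an integral
coordinate sum forbids exactly one) let one move along `±(e_i - e_j)` inside `P_{M,N}`.
-/

open Finset

section Hypersimplex

variable {ι : Type*} [Fintype ι]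

variable (ι) in
def hypersimplex (n : ℕ) : Set (ι → ℝ) :=
  Set.Icc 0 1 ∩ {x | ∑ i, x i = n}

variable {n : ℕ} {x : ι → ℝ}

lemma mem_hypersimplex_iff :
    x ∈ hypersimplex ι n ↔ (∀ i, 0 ≤ x i ∧ x i ≤ 1) ∧ ∑ i, x i = n := by
  simp [hypersimplex, Pi.le_def, forall_and]

lemma convex_hypersimplex : Convex ℝ (hypersimplex ι n) :=
  (convex_Icc 0 1).inter (convex_hyperplane (f := fun x : ι → ℝ => ∑ i, x i)
    ⟨fun x y => by simp [Finset.sum_add_distrib], fun c x => by simp [Finset.mul_sum]⟩ _)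

lemma isCompact_hypersimplex : IsCompact (hypersimplex ι n) :=
  isCompact_Icc.inter_right <| isClosed_eq (by fun_prop) continuous_const

lemma add_mem_hypersimplex (hx : x ∈ hypersimplex ι n) {d : ι → ℝ} (hd : ∑ i, d i = 0)
    (hbound : ∀ i, |d i| ≤ x i ∧ |d i| ≤ 1 - x i) : x + d ∈ hypersimplex ι n := by
  rw [mem_hypersimplex_iff] at hx ⊢
  refine ⟨fun i => ?_, by simp [sum_add_distrib, hx.2, hd]⟩
  have := abs_le.1 (hbound i).1
  have := abs_le.1 (hbound i).2
  constructor <;> simp only [Pi.add_apply] <;> linarith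

lemma exists_ne_fractional_of_mem_hypersimplex (hx : x ∈ hypersimplex ι n) {i : ι}
    (hi : x i ∈ Set.Ioo 0 1) : ∃ j ≠ i, x j ∈ Set.Ioo 0 1 := by
  classical
  by_contra! h
  have hint : ∀ j ∈ univ.erase i, x j = if x j = 1 then 1 else 0 := fun j hj => by
    have := (mem_hypersimplex_iff.1 hx).1 j
    have := h j (ne_of_mem_erase hj)
    simp only [Set.mem_Ioo, not_and, not_lt] at this
    grind
  obtain ⟨m, hm⟩ : ∃ m : ℕ, x i + m = n := ⟨#{j ∈ univ.erase i | x j = 1}, by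
    rw [← (mem_hypersimplex_iff.1 hx).2, ← add_sum_erase _ _ (mem_univ i), sum_congr rfl hint,
      sum_boole]⟩
  have h0 : (m : ℝ) < n := by linarith [hi.1]
  have h1 : (n : ℝ) < m + 1 := by linarith [hi.2]
  norm_cast at h0 h1
  omega

lemma notMem_extremePoints_hypersimplex (hx : x ∈ hypersimplex ι n) {i j : ι} (hij : i ≠ j)
    (hi : x i ∈ Set.Ioo 0 1) (hj : x j ∈ Set.Ioo 0 1) :
    x ∉ (hypersimplex ι n).extremePoints ℝ := by
  classical
  intro hext
  set ε := min (min (x i) (1 - x i)) (min (x j) (1 - x j))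
  have hε : 0 < ε := by
    simp only [ε, lt_min_iff, sub_pos]; exact ⟨⟨hi.1, hi.2⟩, hj.1, hj.2⟩
  set d : ι → ℝ := Pi.single i ε - Pi.single j ε
  have hd : ∀ k, |d k| ≤ x k ∧ |d k| ≤ 1 - x k := fun k => by
    have := (mem_hypersimplex_iff.1 hx).1 k
    by_cases hki : k = i <;> by_cases hkj : k = j <;> simp_all [d, ε, abs_of_pos hε]
  have hdsum : ∑ k, d k = 0 := by simp [d, sum_sub_distrib]
  have hplus := add_mem_hypersimplex hx hdsum hd
  have hminus := add_mem_hypersimplex hx (d := -d) (by simp [hdsum]) (by simpa using hd)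
  have hseg : x ∈ openSegment ℝ (x + d) (x + -d) :=
    ⟨1 / 2, 1 / 2, by norm_num, by norm_num, by norm_num, by module⟩
  have := congr_fun (hext.2 hplus hminus hseg) i
  simp [d, hij, hε.ne'] at this

end Hypersimplex

section Occupation

variable {ι : Type*} [Fintype ι] [DecidableEq ι] {n : ℕ}

lemma extremePoints_hypersimplex_subset :
    (hypersimplex ι n).extremePoints ℝ ⊆
      Set.range fun (s : {s : Finset ι // #s = n}) i => if i ∈ s.1 then (1 : ℝ) else 0 := by
  intro x hext
  have hx := hext.1
  have h01 : ∀ i, x i = if x i = 1 then 1 else 0 := fun i => by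
    by_contra hne
    have hi : x i ∈ Set.Ioo 0 1 := by
      have := (mem_hypersimplex_iff.1 hx).1 i
      grind
    obtain ⟨j, hji, hj⟩ := exists_ne_fractional_of_mem_hypersimplex hx hi
    exact notMem_extremePoints_hypersimplex hx hji.symm hi hj hext
  have hcard : #{i | x i = 1} = n := by
    have := (mem_hypersimplex_iff.1 hx).2
    rw [sum_congr rfl fun i _ => h01 i, sum_boole] at this
    exact_mod_cast this
  exact ⟨⟨({i | x i = 1} : Finset ι), hcard⟩, funext fun i => by simpa using (h01 i).symm⟩

variable (n) in
noncomputable def occupationMap : ({s : Finset ι // #s = n} → ℝ) →ₗ[ℝ] ι → ℝ :=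
  Fintype.linearCombination ℝ fun s i => if i ∈ s.1 then 1 else 0

lemma occupationMap_apply (p : {s : Finset ι // #s = n} → ℝ) (i : ι) :
    occupationMap n p i = ∑ s, if i ∈ s.1 then p s else 0 := by
  simp [occupationMap, Fintype.linearCombination_apply, Finset.sum_apply]

lemma occupationMap_single (s : {s : Finset ι // #s = n}) :
    occupationMap n (Pi.single s 1) = fun i => if i ∈ s.1 then 1 else 0 := by
  simp [occupationMap]

lemma occupationMap_mem_hypersimplex {p : {s : Finset ι // #s = n} → ℝ}
    (hp : p ∈ stdSimplex ℝ _) : occupationMap n p ∈ hypersimplex ι n := by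
  simp only [mem_hypersimplex_iff, occupationMap_apply]
  refine ⟨fun i => ⟨sum_nonneg fun s _ => ?_, ?_⟩, ?_⟩
  · split_ifs
    exacts [hp.1 s, le_rfl]
  · calc _ ≤ ∑ s, p s := sum_le_sum fun s _ => by split_ifs; exacts [le_rfl, hp.1 s]
      _ = 1 := hp.2
  · calc _ = ∑ s : {s : Finset ι // #s = n}, (n : ℝ) * p s := by
          rw [sum_comm]
          refine sum_congr rfl fun s _ => ?_
          rw [sum_ite_mem, univ_inter, sum_const, s.2, nsmul_eq_mul]
      _ = n := by rw [← mul_sum, hp.2, mul_one]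

lemma hypersimplex_subset_image_occupationMap :
    hypersimplex ι n ⊆ occupationMap n '' stdSimplex ℝ _ := by
  have hcompact : IsCompact (occupationMap n '' stdSimplex ℝ {s : Finset ι // #s = n}) :=
    (isCompact_stdSimplex ℝ _).image (occupationMap n).continuous_of_finiteDimensional
  rw [← closure_convexHull_extremePoints isCompact_hypersimplex convex_hypersimplex]
  refine closure_minimal (convexHull_min ?_ ((convex_stdSimplex ℝ _).linear_image _))
    hcompact.isClosed
  refine extremePoints_hypersimplex_subset.trans ?_
  rintro _ ⟨s, rfl⟩
  exact ⟨_, single_mem_stdSimplex ℝ s, occupationMap_single s⟩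

lemma image_occupationMap_stdSimplex :
    occupationMap n '' stdSimplex ℝ _ = hypersimplex ι n :=
  Set.Subset.antisymm (Set.image_subset_iff.2 fun _ hp => occupationMap_mem_hypersimplex hp)
    hypersimplex_subset_image_occupationMap

end Occupation

lemma density_eq_occupationMap {M N : ℕ} (Ψ : {I : Finset (Fin M) // I.card = N} → ℂ) :
    density M N Ψ = occupationMap N fun I => Complex.normSq (Ψ I) :=
  funext fun i => (occupationMap_apply _ i).symm

lemma exists_normSq_eq_of_mem_stdSimplex {κ : Type*} [Fintype κ] {p : κ → ℝ}
    (hp : p ∈ stdSimplex ℝ κ) : ∃ Ψ : κ → ℂ, (fun k => Complex.normSq (Ψ k)) = p :=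
  ⟨fun k => (Real.sqrt (p k) : ℂ), funext fun k => by
    rw [Complex.normSq_ofReal, Real.mul_self_sqrt (hp.1 k)]⟩

theorem N_representability (M N : ℕ) (ρ : Fin M → ℝ) :
    ((∀ i, 0 ≤ ρ i ∧ ρ i ≤ 1) ∧ ∑ i, ρ i = N) ↔
      ∃ Ψ : {I : Finset (Fin M) // I.card = N} → ℂ,
        (∑ I : {I : Finset (Fin M) // I.card = N}, Complex.normSq (Ψ I) = 1) ∧
        ∀ i, density M N Ψ i = ρ i := by
  simp_rw [← mem_hypersimplex_iff, ← image_occupationMap_stdSimplex, density_eq_occupationMap,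
    ← funext_iff]
  constructor
  · rintro ⟨p, hp, rfl⟩
    obtain ⟨Ψ, rfl⟩ := exists_normSq_eq_of_mem_stdSimplex hp
    exact ⟨Ψ, hp.2, rfl⟩
  · rintro ⟨Ψ, hΨ, hρ⟩
    exact ⟨_, ⟨fun I => Complex.normSq_nonneg _, hΨ⟩, hρ⟩
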